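/- For any p ∈ C¹(ℝ) with p(-∞) = 1, p(+∞) = 0, the energy ∫_ℝ (|p'(s)|²/2 + W(p(s))) ds is at least ∫_ℝ (|q'(s)|²/2 + W(q(s))) ds, where q(t) = (1/2)(1 - tanh(t/2)) and W(s) = (1/2)s²(1-s)²; i.e., q is a minimizer of the one-dimensional Allen-Cahn energy among profiles connecting 1 to 0. -/

import Mathlib

open MeasureTheory

noncomputable def q (t : ℝ) : ℝ := (1/2) * (1 - Real.tanh (t/2))

noncomputable def W (s : ℝ) : ℝ := (1/2) * s^2 * (1-s)^2

/-!
Modica–Mortola trick. Since `W(u) = (u(1-u))²/2`, AM–GM gives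
`p'²/2 + W(p) ≥ |p(1-p) p'| = |(Φ ∘ p)'|` with `Φ(u) = u²/2 - u³/3`, so the energy of `p` is at
least the total variation `|Φ(0) - Φ(1)| = 1/6` of `Φ ∘ p`. The profile `q` solves
`q' = -q(1-q)`, which makes AM–GM an equality and `Φ ∘ q` monotone, so its energy is exactly `1/6`.
-/

open Filter Set Topology

section FundamentalTheorem

variable {F f : ℝ → ℝ} {a b : ℝ}

theorem enorm_sub_le_lintegral_enorm_of_hasDerivAt_of_tendsto
    (hderiv : ∀ x, HasDerivAt F (f x) x) (hbot : Tendsto F atBot (𝓝 a))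
    (htop : Tendsto F atTop (𝓝 b)) : ‖b - a‖ₑ ≤ ∫⁻ x, ‖f x‖ₑ := by
  by_cases hf : Integrable f
  · rw [← integral_of_hasDerivAt_of_tendsto hderiv hf hbot htop]
    exact enorm_integral_le_lintegral_enorm f
  · have hmeas : AEStronglyMeasurable f := by
      rw [show f = deriv F from funext fun x => (hderiv x).deriv.symm]
      exact (measurable_deriv F).aestronglyMeasurable
    rw [Integrable, not_and, HasFiniteIntegral, not_lt, top_le_iff] at hf
    rw [hf hmeas]
    exact le_top

theorem integrable_of_hasDerivAt_of_nonneg_of_tendsto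
    (hderiv : ∀ x, HasDerivAt F (f x) x) (hf : 0 ≤ f) (hbot : Tendsto F atBot (𝓝 a))
    (htop : Tendsto F atTop (𝓝 b)) : Integrable f := by
  have hmono : Monotone F := monotone_of_hasDerivAt_nonneg hderiv hf
  have hint (n : ℕ) : IntegrableOn f (Ioc (-n) n) :=
    intervalIntegral.integrableOn_deriv_of_nonneg
      (fun x _ => (hderiv x).continuousAt.continuousWithinAt) (fun x _ => hderiv x)
      (fun x _ => hf x)
  refine integrable_of_intervalIntegral_norm_bounded (b - a) hint
    (tendsto_neg_atTop_atBot.comp tendsto_natCast_atTop_atTop) tendsto_natCast_atTop_atTop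
    (Eventually.of_forall fun n => ?_)
  have hn : -(n : ℝ) ≤ n := by simp
  calc ∫ x in -(n : ℝ)..n, ‖f x‖ = F n - F (-n) := by
        simp_rw [Real.norm_of_nonneg (hf _)]
        exact intervalIntegral.integral_eq_sub_of_hasDerivAt (fun x _ => hderiv x)
          ((intervalIntegrable_iff_integrableOn_Ioc_of_le hn).mpr (hint n))
    _ ≤ b - a := sub_le_sub (hmono.ge_of_tendsto htop n) (hmono.le_of_tendsto hbot (-n))

theorem lintegral_ofReal_eq_of_hasDerivAt_of_nonneg_of_tendsto
    (hderiv : ∀ x, HasDerivAt F (f x) x) (hf : 0 ≤ f) (hbot : Tendsto F atBot (𝓝 a))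
    (htop : Tendsto F atTop (𝓝 b)) : ∫⁻ x, ENNReal.ofReal (f x) = ENNReal.ofReal (b - a) := by
  have hint := integrable_of_hasDerivAt_of_nonneg_of_tendsto hderiv hf hbot htop
  rw [← integral_of_hasDerivAt_of_tendsto hderiv hint hbot htop,
    ofReal_integral_eq_lintegral_ofReal hint (Eventually.of_forall hf)]

end FundamentalTheorem

namespace AllenCahn

noncomputable def Φ (u : ℝ) : ℝ := u^2/2 - u^3/3

theorem hasDerivAt_Φ (u : ℝ) : HasDerivAt Φ (u * (1 - u)) u := by
  have := ((hasDerivAt_pow 2 u).div_const 2).sub ((hasDerivAt_pow 3 u).div_const 3)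
  exact this.congr_deriv (by ring)

theorem continuous_Φ : Continuous Φ := by
  unfold Φ; fun_prop

theorem abs_mul_le_energy_density (x y : ℝ) : |y * (1 - y) * x| ≤ x^2/2 + W y := by
  rw [abs_le, W]
  constructor <;> nlinarith [sq_nonneg (x + y * (1 - y)), sq_nonneg (x - y * (1 - y))]

theorem ofReal_one_sixth_le_energy {p : ℝ → ℝ} (hp : Differentiable ℝ p)
    (hbot : Tendsto p atBot (𝓝 1)) (htop : Tendsto p atTop (𝓝 0)) :
    ENNReal.ofReal (1/6) ≤ ∫⁻ s, ENNReal.ofReal ((deriv p s)^2 / 2 + W (p s)) := by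
  have hΦp (x : ℝ) : HasDerivAt (Φ ∘ p) (p x * (1 - p x) * deriv p x) x :=
    (hasDerivAt_Φ (p x)).comp x (hp x).hasDerivAt
  calc ENNReal.ofReal (1/6) = ‖Φ 0 - Φ 1‖ₑ := by norm_num [Φ, Real.enorm_eq_ofReal_abs]
    _ ≤ ∫⁻ s, ‖p s * (1 - p s) * deriv p s‖ₑ :=
      enorm_sub_le_lintegral_enorm_of_hasDerivAt_of_tendsto hΦp
        ((continuous_Φ.tendsto 1).comp hbot) ((continuous_Φ.tendsto 0).comp htop)
    _ ≤ _ := lintegral_mono fun s => by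
      rw [Real.enorm_eq_ofReal_abs]
      exact ENNReal.ofReal_le_ofReal (abs_mul_le_energy_density _ _)

theorem q_eq_sigmoid_comp_neg : q = Real.sigmoid ∘ Neg.neg := funext fun t => by
  have hexp : Real.exp t = Real.exp (t/2) ^ 2 := by rw [← Real.exp_nat_mul]; ring_nf
  rw [q, Function.comp_apply, Real.sigmoid_def, neg_neg, Real.tanh_eq_sinh_div_cosh,
    Real.sinh_eq, Real.cosh_eq, Real.exp_neg, hexp]
  have := Real.exp_pos (t/2)
  field_simp
  ring

theorem hasDerivAt_q (t : ℝ) : HasDerivAt q (-(q t * (1 - q t))) t := by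
  rw [q_eq_sigmoid_comp_neg]
  simpa using (Real.hasDerivAt_sigmoid (-t)).comp t (hasDerivAt_neg t)

theorem energy_q :
    ∫⁻ s, ENNReal.ofReal ((deriv q s)^2 / 2 + W (q s)) = ENNReal.ofReal (1/6) := by
  have hdensity (s : ℝ) : (deriv q s)^2 / 2 + W (q s) = (q s * (1 - q s))^2 := by
    rw [(hasDerivAt_q s).deriv, W]; ring
  have hΦq (s : ℝ) : HasDerivAt (fun t => -Φ (q t)) ((q s * (1 - q s))^2) s :=
    ((hasDerivAt_Φ (q s)).comp s (hasDerivAt_q s)).neg.congr_deriv (by ring)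
  have hq_bot : Tendsto q atBot (𝓝 1) := by
    rw [q_eq_sigmoid_comp_neg]; exact Real.tendsto_sigmoid_atTop.comp tendsto_neg_atBot_atTop
  have hq_top : Tendsto q atTop (𝓝 0) := by
    rw [q_eq_sigmoid_comp_neg]; exact Real.tendsto_sigmoid_atBot.comp tendsto_neg_atTop_atBot
  simp_rw [hdensity]
  rw [lintegral_ofReal_eq_of_hasDerivAt_of_nonneg_of_tendsto hΦq (fun s => sq_nonneg _)
    ((continuous_Φ.tendsto 1).comp hq_bot).neg ((continuous_Φ.tendsto 0).comp hq_top).neg]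
  norm_num [Φ]

end AllenCahn

theorem q_minimizes_AllenCahn_energy (p : ℝ → ℝ)
    (hp : ContDiff ℝ 1 p)
    (hlim₁ : Filter.Tendsto p Filter.atBot (nhds 1))
    (hlim₂ : Filter.Tendsto p Filter.atTop (nhds 0)) :
    ∫⁻ s, ENNReal.ofReal ((deriv q s)^2 / 2 + W (q s)) ≤
      ∫⁻ s, ENNReal.ofReal ((deriv p s)^2 / 2 + W (p s)) :=
  calc _ = ENNReal.ofReal (1/6) := AllenCahn.energy_q
    _ ≤ _ := AllenCahn.ofReal_one_sixth_le_energy (hp.differentiable one_ne_zero) hlim₁ hlim₂
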